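/- arXiv:1804.10067 — 3 statements merged into one kernel-verified Lean document; each statement's English description precedes it below -/
import Mathlib

section
/- If a function w on pairs of events satisfies the product rule w(A ∧ B | C) = w(B|C)·w(A | B ∧ C) and the negation rule w(A|B) + w(¬A|B) = 1 (for all events in a Boolean algebra), then the general sum rule holds: w(A ∨ B | C) = w(A|C) + w(B|C) − w(A ∧ B | C). -/
/-- Cox sum rule: the product rule and the negation rule imply the general
sum rule `w(A ∨ B | C) = w(A|C) + w(B|C) − w(A ∧ B|C)`. -/
theorem cox_sum_rule {Ω : Type*} [Fintype Ω]
    (w : Set Ω → Set Ω → ℝ)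
    (hrange : ∀ A B, w A B ∈ Set.Icc (0 : ℝ) 1)
    (hprod : ∀ A B C, w (A ∩ B) C = w B C * w A (B ∩ C))
    (hneg : ∀ A B, w A B + w Aᶜ B = 1) :
    ∀ A B C : Set Ω, w (A ∪ B) C = w A C + w B C - w (A ∩ B) C := by
  intro A B C
  -- split of w A C
  have h1 : w (A ∩ B) C + w (A ∩ Bᶜ) C = w A C := by
    rw [Set.inter_comm A B, Set.inter_comm A Bᶜ, hprod B A C, hprod Bᶜ A C, ← mul_add,
      hneg B (A ∩ C), mul_one]
  -- complement of union
  have h2 : w (A ∪ B) C = 1 - w (Aᶜ ∩ Bᶜ) C := by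
    have := hneg (A ∪ B) C
    rw [Set.compl_union] at this
    linarith
  have h3 : w (Aᶜ ∩ Bᶜ) C = w Bᶜ C - w (A ∩ Bᶜ) C := by
    rw [hprod Aᶜ Bᶜ C, hprod A Bᶜ C]
    have := hneg A (Bᶜ ∩ C)
    linear_combination w Bᶜ C * this
  have h4 := hneg B C
  linarith
end

section
/- If w satisfies the product rule, the negation rule, and hence the sum rule, then w is finitely additive in its first argument: w(A ∨ B | C) = w(A|C) + w(B|C) whenever A ∩ B = ∅. -/
/-- The product rule and negation rule imply finite additivity:
`w(A ∨ B|C) = w(A|C) + w(B|C)` whenever `A ∩ B = ∅`. -/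
theorem cox_additivity {Ω : Type*} [Fintype Ω]
    (w : Set Ω → Set Ω → ℝ)
    (hrange : ∀ A B, w A B ∈ Set.Icc (0 : ℝ) 1)
    (hprod : ∀ A B C, w (A ∩ B) C = w B C * w A (B ∩ C))
    (hneg : ∀ A B, w A B + w Aᶜ B = 1) :
    ∀ A B C : Set Ω, A ∩ B = ∅ → w (A ∪ B) C = w A C + w B C := by
  intro A B C hAB
  have hA : A ∩ Bᶜ = A := by
    ext x; simp only [Set.mem_inter_iff, Set.mem_compl_iff]
    constructor
    · rintro ⟨hx, _⟩; exact hx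
    · intro hx
      refine ⟨hx, fun hxB => ?_⟩
      have : x ∈ A ∩ B := ⟨hx, hxB⟩
      rw [hAB] at this; exact this
  have h1 : w (A ∪ B) C + w (Aᶜ ∩ Bᶜ) C = 1 := by
    have := hneg (A ∪ B) C
    rwa [Set.compl_union] at this
  have h2 : w (Aᶜ ∩ Bᶜ) C = w Bᶜ C * w Aᶜ (Bᶜ ∩ C) := hprod Aᶜ Bᶜ C
  have h3 : w Aᶜ (Bᶜ ∩ C) = 1 - w A (Bᶜ ∩ C) := by
    have := hneg A (Bᶜ ∩ C); linarith
  have h4 : w A C = w Bᶜ C * w A (Bᶜ ∩ C) := by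
    have := hprod A Bᶜ C; rwa [hA] at this
  have h5 : w Bᶜ C = 1 - w B C := by have := hneg B C; linarith
  rw [h2, h3] at h1
  nlinarith [h1, h4, h5]
end

section
/- The Lüders rule satisfies the quantum Rényi ratio axiom: for projections Q ≤ R with tr(RρR Q)/tr(ρR) > 0, and any projection P commuting with Q, one has tr(QρQ(PQ))/tr(ρQ) = [tr(RρR(PQ))/tr(ρR)] / [tr(RρRQ)/tr(ρR)]. -/
open Matrix ComplexOrder

/-- The Lüders rule satisfies the quantum Rényi ratio axiom: for projections
`Q ≤ R` (i.e. `Q = QR = RQ`) and `P` commuting with `Q`,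
`tr(QρQ(PQ))/tr(ρQ) = [tr(RρR(PQ))/tr(ρR)] / [tr(RρRQ)/tr(ρR)]`. -/
theorem lueders_renyi_ratio {n : ℕ}
    (ρ P Q R : Matrix (Fin n) (Fin n) ℂ)
    (hρ : ρ.PosSemidef) (hρtr : ρ.trace = 1)
    (hP : P.IsHermitian) (hP2 : P * P = P)
    (hQ : Q.IsHermitian) (hQ2 : Q * Q = Q)
    (hR : R.IsHermitian) (hR2 : R * R = R)
    (hQR1 : Q = Q * R) (hQR2 : Q = R * Q)
    (hPQ : P * Q = Q * P)
    (htrR : 0 < (ρ * R).trace.re)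
    (htrQ : 0 < ((R * ρ * R * Q).trace / (ρ * R).trace).re) :
    (Q * ρ * Q * (P * Q)).trace / (ρ * Q).trace =
      ((R * ρ * R * (P * Q)).trace / (ρ * R).trace) /
        ((R * ρ * R * Q).trace / (ρ * R).trace) := by
  -- algebraic simplifications of the projections
  have hQPQ : Q * (P * Q) = P * Q := by
    rw [← mul_assoc, ← hPQ, mul_assoc, hQ2]
  have hPQR : (P * Q) * R = P * Q := by
    rw [mul_assoc, ← hQR1]
  have hRPQ : R * (P * Q) = P * Q := by
    rw [hPQ, ← mul_assoc, ← hQR2, ← hPQ]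
  -- trace identities
  have e1 : (Q * ρ * Q * (P * Q)).trace = (ρ * (P * Q)).trace := by
    have : Q * ρ * Q * (P * Q) = Q * ρ * (P * Q) := by
      rw [mul_assoc (Q * ρ), hQPQ]
    have h2 : (P * Q) * (Q * ρ) = (P * Q) * ρ := by
      rw [← mul_assoc, mul_assoc P, hQ2]
    rw [this, Matrix.trace_mul_comm, h2, Matrix.trace_mul_comm]
  have e2 : (R * ρ * R * (P * Q)).trace = (ρ * (P * Q)).trace := by
    have : R * ρ * R * (P * Q) = R * ρ * (P * Q) := by
      rw [mul_assoc (R * ρ), hRPQ]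
    have h2 : (P * Q) * (R * ρ) = (P * Q) * ρ := by
      rw [← mul_assoc, hPQR]
    rw [this, Matrix.trace_mul_comm, h2, Matrix.trace_mul_comm]
  have e3 : (R * ρ * R * Q).trace = (ρ * Q).trace := by
    have h1 : R * ρ * R * Q = R * ρ * Q := by
      rw [mul_assoc (R * ρ), ← hQR2]
    have h2 : Q * (R * ρ) = Q * ρ := by
      rw [← mul_assoc, ← hQR1]
    rw [h1, Matrix.trace_mul_comm, h2, Matrix.trace_mul_comm]
  have hRne : (ρ * R).trace ≠ 0 := by
    intro h; rw [h] at htrR; simp at htrR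
  have hQne : (ρ * Q).trace ≠ 0 := by
    intro h
    rw [e3, h, zero_div] at htrQ
    simp at htrQ
  rw [e1, e2, e3]
  field_simp
end
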